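/- Let D be a division ring, Γ₀ a linearly ordered commutative group with zero, and v : D → Γ₀ a valuation (i.e. v(xy) = v(x)v(y), v(x+y) ≤ max(v(x), v(y)), v(1) = 1, v(0) = 0). Let k be a positive integer such that v(k·1_D) = 1. Then every x ∈ D with v(x − 1) < 1 and x^k = 1 satisfies x = 1. -/

import Mathlib

/-! If `x ∈ 1 + M`, then so is every power `x ^ i`, hence the geometric sum
`S = ∑_{i<k} x ^ i` is congruent to `k` modulo `M`. When `k` is a valuation unit this makes
`S` a unit as well, and `S * (x - 1) = x ^ k - 1 = 0` forces `x = 1`. -/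

namespace Valuation

open Finset

variable {R Γ₀ : Type*} [Ring R] [LinearOrderedCommGroupWithZero Γ₀] (v : Valuation R Γ₀)
  {x : R}

theorem map_eq_one_of_sub_one_lt_one (hx : v (x - 1) < 1) : v x = 1 :=
  v.map_eq_of_sub_lt (by rwa [v.map_one]) |>.trans v.map_one

theorem map_geom_sum_le_one (hx : v (x - 1) < 1) (n : ℕ) : v (∑ i ∈ range n, x ^ i) ≤ 1 :=
  v.map_sum_le fun i _ => by rw [v.map_pow, v.map_eq_one_of_sub_one_lt_one hx, one_pow]

theorem map_pow_sub_one_lt_one (hx : v (x - 1) < 1) (n : ℕ) : v (x ^ n - 1) < 1 :=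
  calc v (x ^ n - 1) = v (∑ i ∈ range n, x ^ i) * v (x - 1) := by rw [← v.map_mul, geom_sum_mul]
    _ ≤ 1 * v (x - 1) := mul_le_mul_left (v.map_geom_sum_le_one hx n) _
    _ < 1 := by rwa [one_mul]

theorem map_geom_sum_sub_natCast_lt_one (hx : v (x - 1) < 1) (n : ℕ) :
    v (∑ i ∈ range n, x ^ i - n) < 1 := by
  have hsum : ∑ i ∈ range n, x ^ i - n = ∑ i ∈ range n, (x ^ i - 1) := by
    simp only [sum_sub_distrib, sum_const, card_range, nsmul_one]
  rw [hsum]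
  exact v.map_sum_lt one_ne_zero fun i _ => v.map_pow_sub_one_lt_one hx i

theorem map_geom_sum_eq_one (hx : v (x - 1) < 1) {n : ℕ} (hn : v (n : R) = 1) :
    v (∑ i ∈ range n, x ^ i) = 1 :=
  (v.map_eq_of_sub_lt (by rw [hn]; exact v.map_geom_sum_sub_natCast_lt_one hx n)).trans hn

end Valuation

theorem one_add_maximalIdeal_no_torsion_general {D : Type*} [DivisionRing D] {Γ₀ : Type*}
    [LinearOrderedCommGroupWithZero Γ₀] (v : Valuation D Γ₀)
    (k : ℕ) (hkv : v (k : D) = 1) :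
    ∀ x : D, v (x - 1) < 1 → x ^ k = 1 → x = 1 := by
  intro x hx hxk
  have hS : ∑ i ∈ Finset.range k, x ^ i ≠ 0 := fun h => by
    simpa [h] using v.map_geom_sum_eq_one hx hkv
  have hmul : (∑ i ∈ Finset.range k, x ^ i) * (x - 1) = 0 := by
    rw [geom_sum_mul, hxk, sub_self]
  exact sub_eq_zero.mp ((mul_eq_zero.mp hmul).resolve_left hS)

/-- If `k` is a positive integer whose image in `D` is a valuation unit
(`v (k : D) = 1`), then every element of `1 + M` which is a `k`-th root of unity
is trivial. -/
theorem one_add_maximalIdeal_no_torsion {D : Type*} [DivisionRing D] {Γ₀ : Type*}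
    [LinearOrderedCommGroupWithZero Γ₀] (v : Valuation D Γ₀)
    (k : ℕ) (hk : 0 < k) (hkv : v (k : D) = 1) :
    ∀ x : D, v (x - 1) < 1 → x ^ k = 1 → x = 1 :=
  one_add_maximalIdeal_no_torsion_general v k hkv
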